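/- arXiv:2603.12922 — 3 statements merged into one kernel-verified Lean document; each statement's English description precedes it below -/
import Mathlib

section
/- Let X be a normed lattice, Y a Banach lattice, both satisfying ‖z‖ = max(‖z⁺‖, ‖z⁻‖) for all their elements, and let T : X → Y be a surjective linear operator with ‖(T x)⁺‖ = ‖x⁺‖ for all x ∈ X. Then T is a lattice isometry: T is an isometric linear bijection and both T and T⁻¹ are positive, hence T preserves the lattice operations (T(x ⊔ y) = T x ⊔ T y for all x, y). -/
/-!
Applied to `-x`, the hypothesis also preserves the norm of the negative part, so `T` is
isometric, and `0 ≤ x` iff `(-x) ⊔ 0 = 0` iff `0 ≤ T x`. By linearity `T` is then an order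
embedding, and being surjective it is an order isomorphism, which preserves `⊔`.
-/

section PositivePartNorm

variable {X Y F : Type*} [NormedAddCommGroup X] [Lattice X] [NormedAddCommGroup Y] [Lattice Y]
  [FunLike F X Y] [AddMonoidHomClass F X Y]

lemma norm_neg_map_sup_zero_eq {T : F} (hT : ∀ x, ‖T x ⊔ 0‖ = ‖x ⊔ 0‖) (x : X) :
    ‖(-T x) ⊔ 0‖ = ‖(-x) ⊔ 0‖ := by
  rw [← map_neg, hT]

lemma norm_map_eq_of_norm_map_sup_zero_eq (hX : ∀ x : X, ‖x‖ = max ‖x ⊔ 0‖ ‖(-x) ⊔ 0‖)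
    (hY : ∀ y : Y, ‖y‖ = max ‖y ⊔ 0‖ ‖(-y) ⊔ 0‖) {T : F} (hT : ∀ x, ‖T x ⊔ 0‖ = ‖x ⊔ 0‖)
    (x : X) : ‖T x‖ = ‖x‖ := by
  rw [hX, hY, hT, norm_neg_map_sup_zero_eq hT]

variable [IsOrderedAddMonoid X] [IsOrderedAddMonoid Y]

lemma nonneg_iff_norm_neg_sup_zero_eq_zero (x : X) : 0 ≤ x ↔ ‖(-x) ⊔ 0‖ = 0 := by
  rw [norm_eq_zero, sup_eq_right, neg_nonpos]

lemma map_nonneg_iff_of_norm_map_sup_zero_eq {T : F} (hT : ∀ x, ‖T x ⊔ 0‖ = ‖x ⊔ 0‖) (x : X) :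
    0 ≤ T x ↔ 0 ≤ x := by
  rw [nonneg_iff_norm_neg_sup_zero_eq_zero, nonneg_iff_norm_neg_sup_zero_eq_zero,
    norm_neg_map_sup_zero_eq hT]

lemma map_le_map_iff_of_norm_map_sup_zero_eq {T : F} (hT : ∀ x, ‖T x ⊔ 0‖ = ‖x ⊔ 0‖)
    (a b : X) : T a ≤ T b ↔ a ≤ b := by
  rw [← sub_nonneg, ← map_sub, map_nonneg_iff_of_norm_map_sup_zero_eq hT, sub_nonneg]

end PositivePartNorm

theorem stmt4_general {X Y : Type*}
    [NormedAddCommGroup X] [Lattice X] [IsOrderedAddMonoid X] [NormedSpace ℝ X]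
    [NormedAddCommGroup Y] [Lattice Y] [IsOrderedAddMonoid Y] [NormedSpace ℝ Y]
    (hX : ∀ x : X, ‖x‖ = max ‖x ⊔ 0‖ ‖(-x) ⊔ 0‖)
    (hY : ∀ y : Y, ‖y‖ = max ‖y ⊔ 0‖ ‖(-y) ⊔ 0‖)
    (T : X →ₗ[ℝ] Y) (hsurj : Function.Surjective T)
    (hT : ∀ x : X, ‖T x ⊔ 0‖ = ‖x ⊔ 0‖) :
    Function.Bijective T ∧ (∀ x : X, ‖T x‖ = ‖x‖) ∧
      (∀ x : X, 0 ≤ x → 0 ≤ T x) ∧ (∀ x : X, 0 ≤ T x → 0 ≤ x) ∧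
      (∀ x y : X, T (x ⊔ y) = T x ⊔ T y) := by
  let e : X ≃o Y :=
    .ofSurjective (.ofMapLEIff T (map_le_map_iff_of_norm_map_sup_zero_eq hT)) hsurj
  have hpos := map_nonneg_iff_of_norm_map_sup_zero_eq hT
  exact ⟨e.bijective, norm_map_eq_of_norm_map_sup_zero_eq hX hY hT,
    fun x => (hpos x).2, fun x => (hpos x).1, e.map_sup⟩

theorem stmt4 {X Y : Type*}
    [NormedAddCommGroup X] [Lattice X] [IsOrderedAddMonoid X] [HasSolidNorm X] [NormedSpace ℝ X]
    [NormedAddCommGroup Y] [Lattice Y] [IsOrderedAddMonoid Y] [HasSolidNorm Y] [NormedSpace ℝ Y] [CompleteSpace Y]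
    (hX : ∀ x : X, ‖x‖ = max ‖x ⊔ 0‖ ‖(-x) ⊔ 0‖)
    (hY : ∀ y : Y, ‖y‖ = max ‖y ⊔ 0‖ ‖(-y) ⊔ 0‖)
    (T : X →ₗ[ℝ] Y) (hsurj : Function.Surjective T)
    (hT : ∀ x : X, ‖T x ⊔ 0‖ = ‖x ⊔ 0‖) :
    Function.Bijective T ∧ (∀ x : X, ‖T x‖ = ‖x‖) ∧
      (∀ x : X, 0 ≤ x → 0 ≤ T x) ∧ (∀ x : X, 0 ≤ T x → 0 ≤ x) ∧
      (∀ x y : X, T (x ⊔ y) = T x ⊔ T y) :=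
  stmt4_general hX hY T hsurj hT
end

section
/- Let K be a compact Hausdorff space, let x ∈ K, and let (x_n) be a sequence of pairwise distinct points of K, all distinct from x, converging to x. Then there exists a sequence (f_n) of continuous functions f_n : K → [0,1] with pairwise disjoint supports such that f_n(x_n) = 1 for all n, and f_n(x) = 0 for all n. -/
open Filter Topology

theorem stmt5 {K : Type*} [TopologicalSpace K] [CompactSpace K] [T2Space K]
    (x : ℕ → K) (x₀ : K) (hinj : Function.Injective x) (hne : ∀ n, x n ≠ x₀)
    (hlim : Tendsto x atTop (𝓝 x₀)) :
    ∃ f : ℕ → C(K, ℝ),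
      (∀ n, ∀ y : K, f n y ∈ Set.Icc (0 : ℝ) 1) ∧
      (Pairwise fun n m => Disjoint (tsupport ⇑(f n)) (tsupport ⇑(f m))) ∧
      (∀ n, f n (x n) = 1) ∧ (∀ n, f n x₀ = 0) := by
  have key : ∀ (n : ℕ) (V : Set K), IsOpen V → x₀ ∈ V → (∀ m, n ≤ m → x m ∈ V) →
      ∃ U W : Set K, IsOpen U ∧ x n ∈ U ∧ closure U ⊆ V ∧ Disjoint (closure U) W ∧
        IsOpen W ∧ x₀ ∈ W ∧ (∀ m, n + 1 ≤ m → x m ∈ W) ∧ W ⊆ V := by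
    intro n V hVo hx₀ hxm
    have htail : Tendsto (fun k => x (k + (n + 1))) atTop (𝓝 x₀) :=
      hlim.comp (tendsto_add_atTop_nat (n + 1))
    set C : Set K := insert x₀ (Set.range fun k => x (k + (n + 1))) with hCdef
    have hC : IsCompact C := htail.isCompact_insert_range
    have hD : IsClosed (C ∪ Vᶜ) := hC.isClosed.union hVo.isClosed_compl
    have hxn : x n ∉ C ∪ Vᶜ := by
      rintro (h | h)
      · rcases h with h | ⟨k, hk⟩
        · exact hne n h
        · have := hinj hk; omega
      · exact h (hxm n le_rfl)
    obtain ⟨U, W, hUo, hWo, hxU, hDW, hUW⟩ :=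
      normal_separation (isClosed_singleton (x := x n)) hD
        (Set.disjoint_left.mpr (by rintro y rfl; simpa using hxn))
    have hclU : closure U ⊆ Wᶜ :=
      closure_minimal (Set.subset_compl_iff_disjoint_right.mpr hUW) hWo.isClosed_compl
    refine ⟨U, W ∩ V, hUo, hxU rfl, ?_, ?_, hWo.inter hVo, ⟨hDW (.inl (.inl rfl)), hx₀⟩,
      fun m hm => ⟨hDW (.inl (.inr ⟨m - (n+1), congrArg x (by omega)⟩)), hxm m (by omega)⟩,
      Set.inter_subset_right⟩
    · intro y hy
      by_contra hyV
      exact hclU hy (hDW (.inr hyV))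
    · exact Set.disjoint_left.mpr fun y hy hyW => hclU hy hyW.1
  choose U W hUo hxU hclUV hdisj hWo hx₀W hxmW hWV using key
  -- recursively build the nested sets
  let Vs : ∀ n : ℕ, {V : Set K // IsOpen V ∧ x₀ ∈ V ∧ ∀ m, n ≤ m → x m ∈ V} :=
    fun n => Nat.rec ⟨Set.univ, isOpen_univ, trivial, fun _ _ => trivial⟩
      (fun k p => ⟨W k p.1 p.2.1 p.2.2.1 p.2.2.2,
        hWo k p.1 p.2.1 p.2.2.1 p.2.2.2, hx₀W k p.1 p.2.1 p.2.2.1 p.2.2.2,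
        fun m hm => hxmW k p.1 p.2.1 p.2.2.1 p.2.2.2 m hm⟩) n
  let Us : ℕ → Set K := fun n => U n (Vs n).1 (Vs n).2.1 (Vs n).2.2.1 (Vs n).2.2.2
  have hVsucc : ∀ n, (Vs (n + 1)).1
      = W n (Vs n).1 (Vs n).2.1 (Vs n).2.2.1 (Vs n).2.2.2 := fun n => rfl
  have hUsO : ∀ n, IsOpen (Us n) := fun n => hUo _ _ _ _ _
  have hxUs : ∀ n, x n ∈ Us n := fun n => hxU _ _ _ _ _
  have hclUsV : ∀ n, closure (Us n) ⊆ (Vs n).1 := fun n => hclUV _ _ _ _ _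
  have hdisjs : ∀ n, Disjoint (closure (Us n)) (Vs (n + 1)).1 := by
    intro n; rw [hVsucc n]; exact hdisj _ _ _ _ _
  have hmono : ∀ m n : ℕ, n ≤ m → (Vs m).1 ⊆ (Vs n).1 := by
    intro m
    induction m with
    | zero => intro n hn; interval_cases n; exact le_rfl
    | succ k ih =>
      intro n hn
      rcases Nat.lt_or_ge n (k + 1) with h | h
      · refine Set.Subset.trans ?_ (ih n (by omega))
        rw [hVsucc k]; exact hWV _ _ _ _ _
      · have : n = k + 1 := by omega
        subst this; exact le_rfl
  -- disjointness of closures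
  have hUdisj : ∀ n m : ℕ, n < m → Disjoint (closure (Us n)) (closure (Us m)) := by
    intro n m hnm
    exact (hdisjs n).mono_right ((hclUsV m).trans (hmono m (n + 1) hnm))
  -- Urysohn functions
  have urysohn : ∀ n : ℕ, ∃ f : C(K, ℝ), Set.EqOn f 0 (Us n)ᶜ ∧ Set.EqOn f 1 {x n} ∧
      ∀ y, f y ∈ Set.Icc (0 : ℝ) 1 := by
    intro n
    exact exists_continuous_zero_one_of_isClosed (hUsO n).isClosed_compl isClosed_singleton
      (Set.disjoint_left.mpr fun y hy h => hy (by rw [show y = x n from h]; exact hxUs n))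
  choose f hf0 hf1 hficc using urysohn
  have hsupp : ∀ n, tsupport ⇑(f n) ⊆ closure (Us n) := by
    intro n
    apply closure_mono
    intro y hy
    by_contra hyU
    exact hy (hf0 n hyU)
  refine ⟨f, fun n y => hficc n y, ?_, fun n => hf1 n rfl, ?_⟩
  · intro n m hnm
    rcases Nat.lt_or_ge n m with h | h
    · exact ((hUdisj n m h).mono (hsupp n) (hsupp m))
    · have h' : m < n := by omega
      exact ((hUdisj m n h').symm.mono (hsupp n) (hsupp m))
  · intro n
    apply hf0 n
    intro hx₀U
    have : x₀ ∈ (Vs (n + 1)).1 := (Vs (n + 1)).2.2.1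
    exact (hdisjs n).ne_of_mem (subset_closure hx₀U) this rfl
end

section
/- Let K be a compact Hausdorff space containing a nontrivial convergent sequence, i.e., a sequence (x_n) of pairwise distinct points converging to a point x with x_n ≠ x for all n. Then the Banach space C(K) of continuous real-valued functions on K with the supremum norm contains a closed linear subspace E isometrically isomorphic to c₀, together with a bounded linear projection P : C(K) → E; explicitly, if (f_n) ⊆ C(K,[0,1]) have pairwise disjoint supports with f_n(x_n) = 1, then P(g) = Σ_n (g(x_n) − g(x)) f_n defines a bounded projection onto the closed span of {f_n}. -/
/-!
Each `x n` is isolated in the compact set `{x₀} ∪ range x`, so `x n` has a closed neighbourhood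
`t n` avoiding the other points, and the sets `interior (t n) \ ⋃ k < n, t k` are pairwise disjoint
open neighbourhoods; Urysohn bumps inside them give the `f n`.

For any such bumps at most one `f n` is nonzero at each point, so `T a = ∑ aₙ fₙ` is a linear
isometry of `c₀` onto the closed span `E` of the `f n`. Since `x n → x₀`, every `f n` vanishes at
`x₀`, and the coefficient map `D g = (g (x n) - g x₀)ₙ`, of norm at most `2`, lands in `c₀` and
satisfies `D ∘ T = id`. Hence `P = T ∘ D` is a bounded projection onto `E`.
-/

open Filter Topology ZeroAtInfty Set Function

namespace ZeroAtInftyContinuousMap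

variable {α β : Type*} [TopologicalSpace α] [DiscreteTopology α] [TopologicalSpace β] [Zero β]

def ofTendstoCofinite (a : α → β) (ha : Tendsto a cofinite (𝓝 0)) : C₀(α, β) where
  toFun := a
  continuous_toFun := continuous_of_discreteTopology
  zero_at_infty' := by rwa [cocompact_eq_cofinite]

@[simp]
theorem ofTendstoCofinite_apply (a : α → β) (ha : Tendsto a cofinite (𝓝 0)) (i : α) :
    ofTendstoCofinite a ha i = a i :=
  rfl

theorem tendsto_cofinite_zero (a : C₀(α, β)) : Tendsto a cofinite (𝓝 0) := by
  simpa only [cocompact_eq_cofinite] using zero_at_infty a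

end ZeroAtInftyContinuousMap

section DisjointSupport

variable {ι α F : Type*} [FunLike F α ℝ] {f : ι → F}

theorem apply_eq_zero_of_pairwise_disjoint_support
    (hd : Pairwise (Disjoint on fun i => support (f i))) {i j : ι} (hij : i ≠ j) {y : α}
    (hy : f i y ≠ 0) : f j y = 0 :=
  notMem_support.1 (disjoint_left.1 (hd hij) hy)

theorem apply_eq_zero_of_pairwise_disjoint_support_of_apply_eq_one
    (hd : Pairwise (Disjoint on fun i => support (f i))) {x : ι → α} (hx : ∀ i, f i (x i) = 1)
    {i j : ι} (hij : i ≠ j) : f i (x j) = 0 :=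
  apply_eq_zero_of_pairwise_disjoint_support hd hij.symm (by simp [hx j])

end DisjointSupport

namespace ContinuousMap

variable {K ι : Type*} [TopologicalSpace K] {f : ι → C(K, ℝ)}

theorem tsum_smul_apply_of_pairwise_disjoint
    (hd : Pairwise (Disjoint on fun i => support (f i))) {x : ι → K} (hx : ∀ i, f i (x i) = 1)
    {a : ι → ℝ} (hs : Summable fun i => a i • f i) (j : ι) : (∑' i, a i • f i) (x j) = a j := by
  rw [← tsum_apply hs, tsum_eq_single j fun i hij => ?_]
  · simp [hx j]
  · simp [apply_eq_zero_of_pairwise_disjoint_support_of_apply_eq_one hd hx hij]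

variable [CompactSpace K]

theorem norm_sum_smul_le_of_pairwise_disjoint (hf : ∀ i, ‖f i‖ ≤ 1)
    (hd : Pairwise (Disjoint on fun i => support (f i))) {a : ι → ℝ} {C : ℝ} (hC : 0 ≤ C)
    {t : Finset ι} (ha : ∀ i ∈ t, ‖a i‖ ≤ C) : ‖∑ i ∈ t, a i • f i‖ ≤ C := by
  refine (norm_le _ hC).2 fun y => ?_
  rw [sum_apply]
  by_cases h : ∃ i ∈ t, f i y ≠ 0
  · obtain ⟨i, hi, hy⟩ := h
    have hothers : ∀ j ∈ t, j ≠ i → (a j • f j) y = 0 := fun j _ hji => by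
      simp [apply_eq_zero_of_pairwise_disjoint_support hd hji.symm hy]
    calc ‖∑ j ∈ t, (a j • f j) y‖ = ‖a i‖ * ‖f i y‖ := by
          rw [Finset.sum_eq_single_of_mem i hi hothers, smul_apply, norm_smul]
      _ ≤ C * 1 :=
          mul_le_mul (ha i hi) (((f i).norm_coe_le_norm y).trans (hf i)) (norm_nonneg _) hC
      _ = C := mul_one C
  · push Not at h
    rw [Finset.sum_eq_zero fun i hi => by simp [h i hi], norm_zero]
    exact hC

theorem summable_smul_of_pairwise_disjoint (hf : ∀ i, ‖f i‖ ≤ 1)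
    (hd : Pairwise (Disjoint on fun i => support (f i))) {a : ι → ℝ}
    (ha : Tendsto a cofinite (𝓝 0)) : Summable fun i => a i • f i := by
  refine summable_iff_vanishing_norm.2 fun ε hε => ?_
  have hsmall : ∀ᶠ i in cofinite, ‖a i‖ < ε / 2 :=
    (tendsto_zero_iff_norm_tendsto_zero.1 ha).eventually (gt_mem_nhds (half_pos hε))
  refine ⟨(eventually_cofinite.1 hsmall).toFinset, fun t ht => ?_⟩
  refine (norm_sum_smul_le_of_pairwise_disjoint hf hd (half_pos hε).le fun i hi => ?_).trans_lt
    (half_lt_self hε)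
  have := Finset.disjoint_left.1 ht hi
  simp only [Finite.mem_toFinset, mem_ofPred_eq, not_not] at this
  exact this.le

theorem norm_tsum_smul_le_of_pairwise_disjoint (hf : ∀ i, ‖f i‖ ≤ 1)
    (hd : Pairwise (Disjoint on fun i => support (f i))) {a : ι → ℝ} {C : ℝ} (hC : 0 ≤ C)
    (ha : ∀ i, ‖a i‖ ≤ C) : ‖∑' i, a i • f i‖ ≤ C := by
  by_cases hs : Summable fun i => a i • f i
  · exact le_of_tendsto' hs.hasSum.norm fun t =>
      norm_sum_smul_le_of_pairwise_disjoint hf hd hC fun i _ => ha i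
  · simpa [tsum_eq_zero_of_not_summable hs] using hC

variable [TopologicalSpace ι] [DiscreteTopology ι]

theorem exists_linearIsometry_tsum_smul (hf : ∀ i, ‖f i‖ ≤ 1)
    (hd : Pairwise (Disjoint on fun i => support (f i))) {x : ι → K} (hx : ∀ i, f i (x i) = 1) :
    ∃ T : C₀(ι, ℝ) →ₗᵢ[ℝ] C(K, ℝ), ∀ a, T a = ∑' i, a i • f i := by
  have hs (a : C₀(ι, ℝ)) : Summable fun i => a i • f i :=
    summable_smul_of_pairwise_disjoint hf hd a.tendsto_cofinite_zero
  let T : C₀(ι, ℝ) →ₗ[ℝ] C(K, ℝ) :=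
    { toFun a := ∑' i, a i • f i
      map_add' a b := by
        simpa only [ZeroAtInftyContinuousMap.coe_add, Pi.add_apply, add_smul] using
          (hs a).tsum_add (hs b)
      map_smul' c a := by
        simpa only [ZeroAtInftyContinuousMap.coe_smul, Pi.smul_apply, smul_eq_mul, mul_smul,
          RingHom.id_apply] using (hs a).tsum_const_smul c }
  refine ⟨⟨T, fun a => le_antisymm ?_ ?_⟩, fun a => rfl⟩
  · exact norm_tsum_smul_le_of_pairwise_disjoint hf hd (norm_nonneg a) fun i =>
      ZeroAtInftyContinuousMap.norm_toBCF_eq_norm (f := a) ▸ a.toBCF.norm_coe_le_norm i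
  · rw [← ZeroAtInftyContinuousMap.norm_toBCF_eq_norm,
      BoundedContinuousFunction.norm_le (norm_nonneg _)]
    intro j
    calc ‖a j‖ = ‖(T a) (x j)‖ := by
          rw [← tsum_smul_apply_of_pairwise_disjoint hd hx (hs a) j]; rfl
      _ ≤ ‖T a‖ := (T a).norm_coe_le_norm (x j)

theorem range_eq_topologicalClosure_span_of_tsum_smul (hf : ∀ i, ‖f i‖ ≤ 1)
    (hd : Pairwise (Disjoint on fun i => support (f i))) (T : C₀(ι, ℝ) →ₗᵢ[ℝ] C(K, ℝ))
    (hT : ∀ a, T a = ∑' i, a i • f i) :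
    LinearMap.range T.toLinearMap = (Submodule.span ℝ (range f)).topologicalClosure := by
  classical
  refine le_antisymm ?_ (Submodule.topologicalClosure_minimal _ (Submodule.span_le.2 ?_) ?_)
  · rintro _ ⟨a, rfl⟩
    have hs := summable_smul_of_pairwise_disjoint hf hd a.tendsto_cofinite_zero
    refine mem_closure_of_tendsto ((hT a).symm ▸ hs.hasSum) (Eventually.of_forall fun t => ?_)
    exact Submodule.sum_mem _ fun i _ => Submodule.smul_mem _ _ (Submodule.subset_span ⟨i, rfl⟩)
  · rintro _ ⟨j, rfl⟩
    let e : C₀(ι, ℝ) := .ofTendstoCofinite (Pi.single j 1) <| tendsto_const_nhds.congr' <|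
      (eventually_cofinite_ne j).mono fun i hi => by simp [hi]
    refine ⟨e, ?_⟩
    simp only [LinearIsometry.coe_toLinearMap, hT]
    rw [tsum_eq_single j fun i hi => by simp [e, Pi.single_eq_of_ne hi]]
    simp [e]
  · rw [LinearMap.coe_range]
    exact T.isometry.isClosedEmbedding.isClosed_range

end ContinuousMap

section Projection

variable {K : Type*} [TopologicalSpace K] {x : ℕ → K} {x₀ : K}

theorem apply_limit_eq_zero_of_pairwise_disjoint {f : ℕ → C(K, ℝ)}
    (hd : Pairwise (Disjoint on fun n => support (f n))) (hx : ∀ n, f n (x n) = 1)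
    (hlim : Tendsto x atTop (𝓝 x₀)) (n : ℕ) : f n x₀ = 0 := by
  refine tendsto_nhds_unique (((f n).continuous.tendsto x₀).comp hlim)
    (tendsto_const_nhds.congr' ?_)
  filter_upwards [eventually_gt_atTop n] with m hm
  exact (apply_eq_zero_of_pairwise_disjoint_support_of_apply_eq_one hd hx hm.ne).symm

variable [CompactSpace K]

theorem exists_continuousLinearMap_sub_apply_limit (hlim : Tendsto x atTop (𝓝 x₀)) :
    ∃ D : C(K, ℝ) →L[ℝ] C₀(ℕ, ℝ), ∀ g n, D g n = g (x n) - g x₀ := by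
  have hcoef (g : C(K, ℝ)) : Tendsto (fun n => g (x n) - g x₀) cofinite (𝓝 0) := by
    rw [Nat.cofinite_eq_atTop, ← sub_self (g x₀)]
    exact ((g.continuous.tendsto x₀).comp hlim).sub_const _
  let D : C(K, ℝ) →ₗ[ℝ] C₀(ℕ, ℝ) :=
    { toFun g := .ofTendstoCofinite _ (hcoef g)
      map_add' g h := by ext n; simp [add_sub_add_comm]
      map_smul' c g := by ext n; simp [mul_sub] }
  refine ⟨D.mkContinuous 2 fun g => ?_, fun g n => rfl⟩
  rw [← ZeroAtInftyContinuousMap.norm_toBCF_eq_norm,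
    BoundedContinuousFunction.norm_le (by positivity)]
  intro n
  calc ‖g (x n) - g x₀‖ ≤ ‖g (x n)‖ + ‖g x₀‖ := norm_sub_le _ _
    _ ≤ ‖g‖ + ‖g‖ := add_le_add (g.norm_coe_le_norm _) (g.norm_coe_le_norm _)
    _ = 2 * ‖g‖ := by ring

theorem exists_projection_tsum_smul {f : ℕ → C(K, ℝ)} (hf : ∀ n, ‖f n‖ ≤ 1)
    (hd : Pairwise (Disjoint on fun n => support (f n))) (hx : ∀ n, f n (x n) = 1)
    (hlim : Tendsto x atTop (𝓝 x₀)) :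
    ∃ P : C(K, ℝ) →L[ℝ] C(K, ℝ), (∀ g, P g = ∑' n, (g (x n) - g x₀) • f n) ∧
      LinearMap.range (P : C(K, ℝ) →ₗ[ℝ] C(K, ℝ)) =
        (Submodule.span ℝ (range f)).topologicalClosure ∧
      ∀ g ∈ (Submodule.span ℝ (range f)).topologicalClosure, P g = g := by
  obtain ⟨T, hT⟩ := ContinuousMap.exists_linearIsometry_tsum_smul hf hd hx
  obtain ⟨D, hD⟩ := exists_continuousLinearMap_sub_apply_limit hlim
  have hDT (a : C₀(ℕ, ℝ)) : D (T a) = a := by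
    have hs := ContinuousMap.summable_smul_of_pairwise_disjoint hf hd a.tendsto_cofinite_zero
    ext n
    rw [hD, hT, ContinuousMap.tsum_smul_apply_of_pairwise_disjoint hd hx hs,
      ← ContinuousMap.tsum_apply hs]
    simp [apply_limit_eq_zero_of_pairwise_disjoint hd hx hlim]
  rw [← ContinuousMap.range_eq_topologicalClosure_span_of_tsum_smul hf hd T hT]
  refine ⟨T.toContinuousLinearMap.comp D, fun g => by simp [hT, hD], ?_, ?_⟩
  · exact LinearMap.range_comp_of_range_eq_top _ (LinearMap.range_eq_top.2 fun a => ⟨T a, hDT a⟩)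
  · rintro _ ⟨a, rfl⟩
    simp [hDT]

end Projection

section Bumps

variable {X : Type*} [TopologicalSpace X] [T2Space X] {x : ℕ → X} {x₀ : X}

theorem isClosed_insert_image_compl_singleton (hlim : Tendsto x atTop (𝓝 x₀)) (n : ℕ) :
    IsClosed (insert x₀ (x '' {n}ᶜ)) := by
  rw [← Nat.cofinite_eq_atTop] at hlim
  rw [image_eq_range]
  exact (hlim.comp Subtype.val_injective.tendsto_cofinite).isCompact_insert_range_of_cofinite
    |>.isClosed

theorem exists_pairwise_disjoint_isOpen_mem [RegularSpace X] (hinj : Injective x)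
    (hne : ∀ n, x n ≠ x₀) (hlim : Tendsto x atTop (𝓝 x₀)) :
    ∃ U : ℕ → Set X, (∀ n, IsOpen (U n)) ∧ (∀ n, x n ∈ U n) ∧ Pairwise (Disjoint on U) := by
  have hsep (n : ℕ) : ∃ t ∈ 𝓝 (x n), IsClosed t ∧ ∀ m ≠ n, x m ∉ t := by
    have hxn : x n ∉ insert x₀ (x '' {n}ᶜ) := by
      rintro (h | ⟨m, hm, h⟩)
      exacts [hne n h, hm (hinj h)]
    obtain ⟨t, htn, htc, hts⟩ := exists_mem_nhds_isClosed_subset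
      ((isClosed_insert_image_compl_singleton hlim n).isOpen_compl.mem_nhds hxn)
    exact ⟨t, htn, htc, fun m hm hmt => hts hmt (mem_insert_of_mem _ (mem_image_of_mem x hm))⟩
  choose t htn htc hxt using hsep
  refine ⟨fun n => interior (t n) \ ⋃ k ∈ Finset.range n, t k,
    fun n => isOpen_interior.sdiff (isClosed_biUnion_finset fun k _ => htc k),
    fun n => ⟨mem_interior_iff_mem_nhds.2 (htn n), ?_⟩, ?_⟩
  · simp only [mem_iUnion, Finset.mem_range, not_exists]
    exact fun k hk => hxt k n hk.ne'
  · refine (pairwise_disjoint_on _).2 fun m n hmn => disjoint_left.2 fun y hym hyn => ?_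
    exact hyn.2 (mem_biUnion (Finset.mem_range.2 hmn) (interior_subset hym.1))

theorem exists_bump_family [LocallyCompactSpace X] (hinj : Injective x) (hne : ∀ n, x n ≠ x₀)
    (hlim : Tendsto x atTop (𝓝 x₀)) :
    ∃ f : ℕ → C(X, ℝ), (∀ n y, f n y ∈ Icc (0 : ℝ) 1) ∧
      (Pairwise fun n m => Disjoint (tsupport (f n)) (tsupport (f m))) ∧ ∀ n, f n (x n) = 1 := by
  obtain ⟨U, hUo, hxU, hUd⟩ := exists_pairwise_disjoint_isOpen_mem hinj hne hlim
  choose f hf1 _ hfU hf01 using fun n => exists_continuousMap_one_of_isCompact_subset_isOpen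
    isCompact_singleton (hUo n) (singleton_subset_iff.2 (hxU n))
  exact ⟨f, hf01, fun n m h => (hUd h).mono (hfU n) (hfU m), fun n => hf1 n rfl⟩

end Bumps

theorem stmt6 {K : Type*} [TopologicalSpace K] [CompactSpace K] [T2Space K]
    (x : ℕ → K) (x₀ : K) (hinj : Function.Injective x) (hne : ∀ n, x n ≠ x₀)
    (hlim : Tendsto x atTop (𝓝 x₀)) :
    (∃ E : Submodule ℝ C(K, ℝ), IsClosed (E : Set C(K, ℝ)) ∧
      Nonempty (C₀(ℕ, ℝ) ≃ₗᵢ[ℝ] E) ∧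
      ∃ P : C(K, ℝ) →L[ℝ] C(K, ℝ), LinearMap.range (P : C(K, ℝ) →ₗ[ℝ] C(K, ℝ)) = E ∧ ∀ g ∈ E, P g = g) ∧
    (∀ f : ℕ → C(K, ℝ),
      (∀ n, ∀ y : K, f n y ∈ Set.Icc (0 : ℝ) 1) →
      (Pairwise fun n m => Disjoint (tsupport ⇑(f n)) (tsupport ⇑(f m))) →
      (∀ n, f n (x n) = 1) →
      ∃ P : C(K, ℝ) →L[ℝ] C(K, ℝ),
        (∀ g : C(K, ℝ), P g = ∑' n, (g (x n) - g x₀) • f n) ∧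
        LinearMap.range (P : C(K, ℝ) →ₗ[ℝ] C(K, ℝ)) = (Submodule.span ℝ (Set.range f)).topologicalClosure ∧
        ∀ g ∈ (Submodule.span ℝ (Set.range f)).topologicalClosure, P g = g) := by
  have hnorm_support (f : ℕ → C(K, ℝ)) (h01 : ∀ n y, f n y ∈ Icc (0 : ℝ) 1)
      (hd : Pairwise fun n m => Disjoint (tsupport (f n)) (tsupport (f m))) :
      (∀ n, ‖f n‖ ≤ 1) ∧ Pairwise (Disjoint on fun n => support (f n)) :=
    ⟨fun n => (ContinuousMap.norm_le _ zero_le_one).2 fun y =>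
      abs_le.2 ⟨by linarith [(h01 n y).1], (h01 n y).2⟩,
      fun n m h => (hd h).mono (subset_tsupport _) (subset_tsupport _)⟩
  refine ⟨?_, fun f h01 hd hx =>
    exists_projection_tsum_smul (hnorm_support f h01 hd).1 (hnorm_support f h01 hd).2 hx hlim⟩
  obtain ⟨f, h01, hd, hx⟩ := exists_bump_family hinj hne hlim
  obtain ⟨hf, hd'⟩ := hnorm_support f h01 hd
  obtain ⟨T, hT⟩ := ContinuousMap.exists_linearIsometry_tsum_smul hf hd' hx
  have hTrange := ContinuousMap.range_eq_topologicalClosure_span_of_tsum_smul hf hd' T hT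
  obtain ⟨P, -, hPrange, hPfix⟩ := exists_projection_tsum_smul hf hd' hx hlim
  exact ⟨_, Submodule.isClosed_topologicalClosure _,
    ⟨T.equivRange.trans (.ofEq _ _ hTrange)⟩, P, hPrange, hPfix⟩
end
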